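/- Let K be a field of arbitrary characteristic, R = K[[x_1,…,x_s]], and A ∈ m·M_{m,n} with o := ord(A). If there exists an integer k ≥ 0 such that m^{k+2}·M_{m,n} ⊆ m·T̃_A(R A) = m²·⟨∂A/∂x_ν : 1≤ν≤s⟩, then A is right (2k−o+2)-determined, i.e. for every B ∈ M_{m,n} with B − A ∈ m^{2k−o+3}·M_{m,n} there exists a K-algebra automorphism φ of R such that B = φ(A). -/

import Mathlib

/-!
Write `𝔪` for the maximal ideal. If `A - C` has entries in `𝔪 ^ (a + k + 2)` with
`a ≥ k + 1 - o`, the hypothesis writes it as `∑ E ν • ∂A/∂x_ν` with `E ν ∈ 𝔪 ^ (a + 2)`, and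
substituting `x ↦ x + E` into `C` gains one order: by Taylor's formula
`f(x + E) - f - ∑ E ν ∂f/∂x_ν ∈ 𝔪 ^ (ord f + 2 (a + 1))`, and `ord C = o`.
Starting from `C = B`, the composed substitutions converge `𝔪`-adically to some `G ≡ x`
modulo `𝔪 ^ 2` with `B(G) = A`. Substituting such a `G` moves each `f ∈ 𝔪 ^ n` by an element of
`𝔪 ^ (n + 1)`, so it is bijective on the complete ring `K[[x]]` (injective by Krull's intersection
theorem, surjective by Newton iteration), and its inverse is the automorphism.

Taylor's estimate holds modulo `𝔪 ^ (2 (a + 1))` for all `f` because `f ↦ f + ∑ E ν ∂f/∂x_ν` is a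
ring homomorphism modulo that ideal agreeing with the substitution on the variables; it then
improves with `ord f` through the identity `T(f x_ν) = E ν · Df + (x_ν + E ν) · T f` for the
remainder `T`. Finally `o ≤ k + 1`, as `x_1 ^ (k + 2)` lies in `𝔪 • T̃_A`, whose entries have order
at least `o + 1`.
-/

open MvPowerSeries IsLocalRing

noncomputable section

/-- The formal partial derivative ∂f/∂x_ν of a formal power series. -/
def pderiv {K : Type*} [Field K] {s : ℕ} (ν : Fin s) (f : MvPowerSeries (Fin s) K) :
    MvPowerSeries (Fin s) K :=
  fun e => ((e ν + 1 : ℕ) : K) * MvPowerSeries.coeff (e + Finsupp.single ν 1) f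

/-- The submodule I·M_{m,n} of matrices all of whose entries lie in the ideal I. -/
def matSub {K : Type*} [Field K] {s m n : ℕ} (I : Ideal (MvPowerSeries (Fin s) K)) :
    Submodule (MvPowerSeries (Fin s) K) (Matrix (Fin m) (Fin n) (MvPowerSeries (Fin s) K)) where
  carrier := {A | ∀ i j, A i j ∈ I}
  add_mem' := fun ha hb i j => I.add_mem (ha i j) (hb i j)
  zero_mem' := fun _ _ => I.zero_mem
  smul_mem' := fun c _ hA i j => I.smul_mem c (hA i j)

/-- The tangent image T̃_A(𝓡 A) = m·⟨∂A/∂x_ν : 1 ≤ ν ≤ s⟩ for the right group. -/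
def TR {K : Type*} [Field K] {s m n : ℕ} (A : Matrix (Fin m) (Fin n) (MvPowerSeries (Fin s) K)) :
    Submodule (MvPowerSeries (Fin s) K) (Matrix (Fin m) (Fin n) (MvPowerSeries (Fin s) K)) :=
  (maximalIdeal (MvPowerSeries (Fin s) K)) •
    Submodule.span _ (Set.range fun ν : Fin s => A.map (pderiv ν))

theorem exists_seq_of_forall_exists {α : Type*} {P : ℕ → α → Prop} {Q : ℕ → α → α → Prop}
    {x₀ : α} (h₀ : P 0 x₀) (step : ∀ n x, P n x → ∃ y, P (n + 1) y ∧ Q n x y) :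
    ∃ x : ℕ → α, x 0 = x₀ ∧ ∀ n, P n (x n) ∧ Q n (x n) (x (n + 1)) := by
  choose! F hFP hFQ using step
  let x : ℕ → α := fun n => Nat.rec x₀ F n
  have hP n : P n (x n) := by
    induction n with
    | zero => exact h₀
    | succ n ih => exact hFP n _ ih
  exact ⟨x, rfl, fun n => ⟨hP n, hFQ n _ (hP n)⟩⟩

section AdicComplete

variable {A : Type*} [CommRing A] {I : Ideal A}

theorem Ideal.sub_mem_pow_of_forall_succ_sub_mem_pow {f : ℕ → A} {c : ℕ}
    (hf : ∀ n, f (n + 1) - f n ∈ I ^ (n + c)) {m n : ℕ} (hmn : m ≤ n) :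
    f n - f m ∈ I ^ (m + c) := by
  induction n, hmn using Nat.le_induction with
  | base => simp
  | succ n hmn ih =>
    have h := Ideal.pow_le_pow_right (by omega : m + c ≤ n + c) (hf n)
    simpa using add_mem h ih

theorem IsPrecomplete.exists_sub_mem_pow [IsPrecomplete I A] {f : ℕ → A} {c : ℕ}
    (hf : ∀ n, f (n + 1) - f n ∈ I ^ (n + c)) : ∃ L, ∀ n, L - f n ∈ I ^ (n + c) := by
  have hmod {a b : A} {n : ℕ} : a ≡ b [SMOD (I ^ n • ⊤ : Ideal A)] ↔ b - a ∈ I ^ n := by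
    rw [SModEq.sub_mem, smul_eq_mul, Ideal.mul_top, ← neg_mem_iff, neg_sub]
  obtain ⟨L, hL⟩ := IsPrecomplete.prec (inferInstance : IsPrecomplete I A) (f := f) fun hmn =>
    hmod.mpr <| Ideal.pow_le_pow_right (Nat.le_add_right _ c)
      (Ideal.sub_mem_pow_of_forall_succ_sub_mem_pow hf hmn)
  refine ⟨L, fun n => ?_⟩
  simpa using add_mem (hmod.mp (hL (n + c)))
    (Ideal.sub_mem_pow_of_forall_succ_sub_mem_pow hf (Nat.le_add_right n c))

theorem IsHausdorff.eq_zero_of_forall_mem_pow [IsHausdorff I A] {x : A} (hx : ∀ n, x ∈ I ^ n) :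
    x = 0 :=
  IsHausdorff.haus (inferInstance : IsHausdorff I A) x fun n => by
    rw [SModEq.sub_mem, sub_zero, smul_eq_mul, Ideal.mul_top]
    exact hx n

theorem IsHausdorff.injective_of_sub_mem_pow_succ [IsHausdorff I A] (ψ : A →+ A)
    (hψ : ∀ n, ∀ f ∈ I ^ n, ψ f - f ∈ I ^ (n + 1)) : Function.Injective ψ := by
  refine (injective_iff_map_eq_zero ψ).mpr fun f hf =>
    IsHausdorff.eq_zero_of_forall_mem_pow (I := I) fun n => ?_
  induction n with
  | zero => simp
  | succ n ih => simpa [hf] using hψ n f ih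

theorem IsAdicComplete.surjective_of_sub_mem_pow_succ [IsAdicComplete I A] (ψ : A →+ A)
    (hψ : ∀ n, ∀ f ∈ I ^ n, ψ f - f ∈ I ^ (n + 1)) : Function.Surjective ψ := by
  intro y
  let x : ℕ → A := fun n => Nat.rec 0 (fun _ x => x + (y - ψ x)) n
  have hx n : y - ψ (x n) ∈ I ^ n := by
    induction n with
    | zero => simp
    | succ n ih =>
      have h : y - ψ (x (n + 1)) = -(ψ (y - ψ (x n)) - (y - ψ (x n))) := by
        simp only [x, map_add]
        ring
      rw [h]
      exact neg_mem (hψ n _ ih)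
  obtain ⟨L, hL⟩ := IsPrecomplete.exists_sub_mem_pow (I := I) (c := 0) (f := x) fun n => by
    simpa [x] using hx n
  refine ⟨L, eq_of_sub_eq_zero (IsHausdorff.eq_zero_of_forall_mem_pow (I := I) fun n => ?_)⟩
  have h : ψ L - y = (ψ (L - x n) - (L - x n)) + (L - x n) - (y - ψ (x n)) := by
    rw [map_sub]
    ring
  have hLx : L - x n ∈ I ^ n := by simpa using hL n
  rw [h]
  exact sub_mem (add_mem (Ideal.pow_le_pow_right n.le_succ (hψ n _ hLx)) hLx) (hx n)

theorem Derivation.map_mem_pow_of_mem_pow_succ {R : Type*} [CommSemiring R] [Algebra R A]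
    (D : Derivation R A A) {n : ℕ} {f : A} (hf : f ∈ I ^ (n + 1)) : D f ∈ I ^ n := by
  induction n generalizing f with
  | zero => simp
  | succ n ih =>
    rw [pow_succ] at hf
    refine Submodule.mul_induction_on hf (fun a ha b hb => ?_) fun x y hx hy => ?_
    · rw [D.leibniz, smul_eq_mul, smul_eq_mul]
      refine add_mem (Ideal.mul_mem_right _ _ ha) ?_
      rw [pow_succ']
      exact Ideal.mul_mem_mul hb (ih ha)
    · rw [map_add]
      exact add_mem hx hy

end AdicComplete

namespace MvPowerSeries

section Ideals

variable {σ R : Type*} [Finite σ] [CommRing R]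

theorem map_toAdicCompletionAlgEquiv_span_range_X :
    Ideal.map (toAdicCompletionAlgEquiv σ R) (Ideal.span (Set.range X)) =
      (MvPolynomial.idealOfVars σ R).map (algebraMap _ _) := by
  simp_rw [Ideal.map_span, ← Set.range_comp]
  congr 2
  ext1
  simp [AdicCompletion.algebraMap_apply, ← MvPolynomial.coe_X, toAdicCompletion_coe]

theorem mem_span_range_X_pow_iff {n : ℕ} {f : MvPowerSeries σ R} :
    f ∈ Ideal.span (Set.range X) ^ n ↔ ∀ d : σ →₀ ℕ, d.degree < n → coeff d f = 0 := by
  set I := MvPolynomial.idealOfVars σ R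
  -- in the adic completion of `R[X]` at `I`, the submodule `I ^ n • ⊤` is the kernel of `eval n`
  have h : f ∈ Ideal.span (Set.range X) ^ n ↔ toAdicCompletionAlgEquiv σ R f ∈
      (I ^ n • ⊤ : Submodule (MvPolynomial σ R) (AdicCompletion I (MvPolynomial σ R))) := by
    rw [Ideal.smul_top_eq_map, Submodule.restrictScalars_mem, Ideal.map_pow,
      ← map_toAdicCompletionAlgEquiv_span_range_X, ← Ideal.map_pow]
    exact (Ideal.apply_mem_of_equiv_iff (f := (toAdicCompletionAlgEquiv σ R).toRingEquiv)).symm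
  rw [h, AdicCompletion.pow_smul_top_eq_ker_eval (MvPolynomial.idealOfVars_fg σ R),
    LinearMap.mem_ker, AdicCompletion.eval_apply, toAdicCompletionAlgEquiv_apply,
    toAdicCompletion_apply_eq_mk_truncTotal, Ideal.Quotient.eq_zero_iff_mem, smul_eq_mul,
    Ideal.mul_top, MvPolynomial.mem_pow_idealOfVars_iff']
  exact forall₂_congr fun d hd => by rw [coeff_truncTotal _ hd]

end Ideals

variable {σ K : Type*} [Field K]

local notation "𝔪" => maximalIdeal (MvPowerSeries σ K)

theorem mem_maximalIdeal_iff_constantCoeff_eq_zero {f : MvPowerSeries σ K} :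
    f ∈ 𝔪 ↔ constantCoeff f = 0 := by
  rw [mem_maximalIdeal, mem_nonunits_iff, isUnit_iff_constantCoeff, isUnit_iff_ne_zero, not_not]

section Finite

variable [Finite σ]

theorem maximalIdeal_eq_span_range_X : 𝔪 = Ideal.span (Set.range X) := by
  ext f
  rw [mem_maximalIdeal_iff_constantCoeff_eq_zero, ← pow_one (Ideal.span _),
    mem_span_range_X_pow_iff]
  simp [Finsupp.degree_eq_zero_iff]

theorem mem_maximalIdeal_pow_iff {n : ℕ} {f : MvPowerSeries σ K} :
    f ∈ 𝔪 ^ n ↔ ∀ d : σ →₀ ℕ, d.degree < n → coeff d f = 0 := by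
  rw [maximalIdeal_eq_span_range_X, mem_span_range_X_pow_iff]

instance : IsAdicComplete 𝔪 (MvPowerSeries σ K) := by
  rw [maximalIdeal_eq_span_range_X]
  infer_instance

theorem X_mem_maximalIdeal (i : σ) : (X i : MvPowerSeries σ K) ∈ 𝔪 := by
  rw [maximalIdeal_eq_span_range_X]
  exact Ideal.subset_span ⟨i, rfl⟩

theorem le_of_X_pow_mem_maximalIdeal_pow {i : σ} {a b : ℕ}
    (h : (X i : MvPowerSeries σ K) ^ a ∈ 𝔪 ^ b) : b ≤ a := by
  classical
  by_contra! hab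
  have := mem_maximalIdeal_pow_iff.mp h (Finsupp.single i a) (by simpa using hab)
  simp [coeff_X_pow] at this

theorem maximalIdeal_eq_bot_of_isEmpty [IsEmpty σ] : 𝔪 = ⊥ := by
  rw [maximalIdeal_eq_span_range_X, Set.range_eq_empty, Ideal.span_empty]

theorem hasSubst_of_mem_maximalIdeal {g : σ → MvPowerSeries σ K} (hg : ∀ i, g i ∈ 𝔪) :
    HasSubst g :=
  hasSubst_of_constantCoeff_zero fun i => mem_maximalIdeal_iff_constantCoeff_eq_zero.mp (hg i)

theorem subst_mem_maximalIdeal_pow {g : σ → MvPowerSeries σ K} (hg : ∀ i, g i ∈ 𝔪) {n : ℕ}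
    {f : MvPowerSeries σ K} (hf : f ∈ 𝔪 ^ n) : subst g f ∈ 𝔪 ^ n := by
  have ha := hasSubst_of_mem_maximalIdeal hg
  have hmap : Ideal.map (substAlgHom ha) 𝔪 ≤ 𝔪 := Ideal.map_le_iff_le_comap.mpr fun f hf => by
    simp only [Ideal.mem_comap, substAlgHom_apply, mem_maximalIdeal_iff_constantCoeff_eq_zero]
    exact constantCoeff_subst_eq_zero ha
      (fun i => mem_maximalIdeal_iff_constantCoeff_eq_zero.mp (hg i))
      (mem_maximalIdeal_iff_constantCoeff_eq_zero.mp hf)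
  have := Ideal.pow_right_mono hmap n
    (Ideal.map_pow (substAlgHom ha) 𝔪 n ▸ Ideal.mem_map_of_mem (substAlgHom ha) hf)
  simpa using this

theorem algHom_ext_of_forall_mem_pow {S : Type*} [Semiring S] [Algebra K S] {N : ℕ}
    {ψ₁ ψ₂ : MvPowerSeries σ K →ₐ[K] S} (h₁ : ∀ f ∈ 𝔪 ^ N, ψ₁ f = 0)
    (h₂ : ∀ f ∈ 𝔪 ^ N, ψ₂ f = 0) (hX : ∀ i, ψ₁ (X i) = ψ₂ (X i)) : ψ₁ = ψ₂ := by
  have hpoly : ψ₁.comp (MvPolynomial.coeToMvPowerSeries.algHom K) =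
      ψ₂.comp (MvPolynomial.coeToMvPowerSeries.algHom K) :=
    MvPolynomial.algHom_ext fun i => by simpa using hX i
  ext f
  have hrem : f - truncTotal N f ∈ 𝔪 ^ N :=
    mem_maximalIdeal_pow_iff.mpr fun d hd => by simp [coeff_truncTotal _ hd]
  have htrunc : ψ₁ (truncTotal N f) = ψ₂ (truncTotal N f) := by
    simpa using DFunLike.congr_fun hpoly (truncTotal N f)
  rw [← sub_add_cancel f (truncTotal N f), map_add, map_add, h₁ _ hrem, h₂ _ hrem, htrunc]

theorem subst_sub_subst_mem_pow {g g' : σ → MvPowerSeries σ K} (hg : ∀ i, g i ∈ 𝔪)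
    (hg' : ∀ i, g' i ∈ 𝔪) {N : ℕ} (hgg' : ∀ i, g i - g' i ∈ 𝔪 ^ N) (f : MvPowerSeries σ K) :
    subst g f - subst g' f ∈ 𝔪 ^ N := by
  have ha := hasSubst_of_mem_maximalIdeal hg
  have ha' := hasSubst_of_mem_maximalIdeal hg'
  have key := algHom_ext_of_forall_mem_pow (N := N)
    (ψ₁ := (Ideal.Quotient.mkₐ K (𝔪 ^ N)).comp (substAlgHom ha))
    (ψ₂ := (Ideal.Quotient.mkₐ K (𝔪 ^ N)).comp (substAlgHom ha'))
    (fun f hf => by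
      simpa [Ideal.Quotient.eq_zero_iff_mem] using subst_mem_maximalIdeal_pow hg hf)
    (fun f hf => by
      simpa [Ideal.Quotient.eq_zero_iff_mem] using subst_mem_maximalIdeal_pow hg' hf)
    (fun i => by simpa [Ideal.Quotient.eq, subst_X ha, subst_X ha'] using hgg' i)
  simpa [Ideal.Quotient.eq] using DFunLike.congr_fun key f

end Finite

section Fintype

variable [Fintype σ]

def vectorField (E : σ → MvPowerSeries σ K) :
    Derivation K (MvPowerSeries σ K) (MvPowerSeries σ K) :=
  ∑ i, E i • pderiv K i

def taylorRemainder (E : σ → MvPowerSeries σ K) (f : MvPowerSeries σ K) : MvPowerSeries σ K :=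
  subst (X + E) f - f - vectorField E f

variable {E : σ → MvPowerSeries σ K} {e : ℕ}

theorem vectorField_apply (f : MvPowerSeries σ K) :
    vectorField E f = ∑ i, E i * pderiv K i f := by
  rw [vectorField, ← Derivation.coeFnAddMonoidHom_apply, map_sum, Finset.sum_apply]
  rfl

theorem vectorField_X [DecidableEq σ] (i : σ) : vectorField E (X i) = E i := by
  simp [vectorField_apply, pderiv_X, Pi.single_apply]

theorem vectorField_mem_pow (hE : ∀ i, E i ∈ 𝔪 ^ (e + 1)) {n : ℕ} {f : MvPowerSeries σ K}
    (hf : f ∈ 𝔪 ^ n) : vectorField E f ∈ 𝔪 ^ (n + e) := by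
  rw [vectorField_apply]
  refine Ideal.sum_mem _ fun i _ => ?_
  cases n with
  | zero => exact Ideal.pow_le_pow_right (by omega) (Ideal.mul_mem_right _ _ (hE i))
  | succ n =>
    have h := Ideal.mul_mem_mul (hE i) ((pderiv K i).map_mem_pow_of_mem_pow_succ hf)
    rw [← pow_add] at h
    exact Ideal.pow_le_pow_right (by omega) h

theorem X_add_mem_maximalIdeal (hE : ∀ i, E i ∈ 𝔪) (i : σ) :
    (X + E : σ → MvPowerSeries σ K) i ∈ 𝔪 :=
  add_mem (X_mem_maximalIdeal i) (hE i)

theorem hasSubst_X_add (hE : ∀ i, E i ∈ 𝔪) : HasSubst (X + E) :=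
  hasSubst_of_mem_maximalIdeal (X_add_mem_maximalIdeal hE)

theorem taylorRemainder_add (hE : ∀ i, E i ∈ 𝔪) (f g : MvPowerSeries σ K) :
    taylorRemainder E (f + g) = taylorRemainder E f + taylorRemainder E g := by
  simp only [taylorRemainder, subst_add (hasSubst_X_add hE), map_add]
  ring

theorem taylorRemainder_mul_X [DecidableEq σ] (hE : ∀ i, E i ∈ 𝔪) (f : MvPowerSeries σ K)
    (i : σ) : taylorRemainder E (f * X i) =
      E i * vectorField E f + (X i + E i) * taylorRemainder E f := by
  simp only [taylorRemainder, subst_mul (hasSubst_X_add hE), subst_X (hasSubst_X_add hE),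
    Derivation.leibniz, vectorField_X, smul_eq_mul, Pi.add_apply]
  ring

theorem taylorRemainder_mem_pow_two_mul (hE : ∀ i, E i ∈ 𝔪 ^ (e + 1))
    (f : MvPowerSeries σ K) : taylorRemainder E f ∈ 𝔪 ^ (2 * e) := by
  classical
  have hE₁ i : E i ∈ 𝔪 := Ideal.pow_le_self e.succ_ne_zero (hE i)
  let q := Ideal.Quotient.mkₐ K (𝔪 ^ (2 * e))
  -- `f ↦ f + D f` is multiplicative modulo `𝔪 ^ (2 * e)`, as `D f * D g ∈ 𝔪 ^ (2 * e)`
  let ψ : MvPowerSeries σ K →ₐ[K] MvPowerSeries σ K ⧸ 𝔪 ^ (2 * e) :=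
    AlgHom.ofLinearMap (q.toLinearMap ∘ₗ (LinearMap.id + (vectorField E).toLinearMap))
      (by simp) fun f g => by
        simp only [LinearMap.coe_comp, Function.comp_apply, LinearMap.add_apply,
          LinearMap.id_apply, Derivation.coeFn_coe, AlgHom.toLinearMap_apply, ← map_mul, q,
          Ideal.Quotient.mkₐ_eq_mk, Ideal.Quotient.eq, Derivation.leibniz, smul_eq_mul]
        have h := Ideal.mul_mem_mul (vectorField_mem_pow hE (n := 0) (f := f) (by simp))
          (vectorField_mem_pow hE (n := 0) (f := g) (by simp))
        rw [← pow_add] at h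
        convert neg_mem (Ideal.pow_le_pow_right (by omega : 2 * e ≤ 0 + e + (0 + e)) h) using 1
        ring
  have hq f : q f = Ideal.Quotient.mk _ f := rfl
  have hψ f : ψ f = Ideal.Quotient.mk _ (f + vectorField E f) := rfl
  have key : q.comp (substAlgHom (hasSubst_X_add hE₁)) = ψ := by
    refine algHom_ext_of_forall_mem_pow (N := 2 * e) (fun f hf => ?_) (fun f hf => ?_) fun i => ?_
    · rw [AlgHom.comp_apply, hq, Ideal.Quotient.eq_zero_iff_mem, substAlgHom_apply]
      exact subst_mem_maximalIdeal_pow (X_add_mem_maximalIdeal hE₁) hf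
    · rw [hψ, Ideal.Quotient.eq_zero_iff_mem]
      exact add_mem hf (Ideal.pow_le_pow_right (by omega) (vectorField_mem_pow hE hf))
    · rw [AlgHom.comp_apply, hq, hψ, substAlgHom_apply, subst_X (hasSubst_X_add hE₁),
        vectorField_X, Pi.add_apply]
  have h := DFunLike.congr_fun key f
  rwa [AlgHom.comp_apply, hq, hψ, Ideal.Quotient.eq, substAlgHom_apply, ← sub_sub] at h

theorem taylorRemainder_mem_pow (hE : ∀ i, E i ∈ 𝔪 ^ (e + 1)) {n : ℕ} {f : MvPowerSeries σ K}
    (hf : f ∈ 𝔪 ^ n) : taylorRemainder E f ∈ 𝔪 ^ (n + 2 * e) := by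
  classical
  have hE₁ i : E i ∈ 𝔪 := Ideal.pow_le_self e.succ_ne_zero (hE i)
  induction n generalizing f with
  | zero => simpa using taylorRemainder_mem_pow_two_mul hE f
  | succ n ih =>
    have hf' : f ∈ 𝔪 ^ n * Ideal.span (Set.range X) := by
      rwa [← maximalIdeal_eq_span_range_X, ← pow_succ]
    refine Submodule.mul_induction_on hf' (fun a ha b hb => ?_) fun x y hx hy => ?_
    · induction hb using Submodule.span_induction generalizing a with
      | mem b hb =>
        obtain ⟨i, rfl⟩ := hb
        have h₁ := Ideal.mul_mem_mul (hE i) (vectorField_mem_pow hE ha)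
        have h₂ := Ideal.mul_mem_mul (X_add_mem_maximalIdeal hE₁ i) (ih ha)
        rw [← pow_add] at h₁
        rw [← pow_succ'] at h₂
        rw [taylorRemainder_mul_X hE₁]
        exact add_mem (Ideal.pow_le_pow_right (by omega) h₁)
          (Ideal.pow_le_pow_right (by omega) h₂)
      | zero =>
        rw [mul_zero, taylorRemainder, ← substAlgHom_apply (hasSubst_X_add hE₁), map_zero,
          map_zero, sub_zero, sub_zero]
        exact zero_mem _
      | add b c _ _ hb hc =>
        rw [mul_add, taylorRemainder_add hE₁]
        exact add_mem (hb a ha) (hc a ha)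
      | smul r b _ hb =>
        rw [smul_eq_mul, ← mul_assoc]
        exact hb _ (Ideal.mul_mem_right _ _ ha)
    · rw [taylorRemainder_add hE₁]
      exact add_mem hx hy

theorem subst_X_add_sub_mem_pow (hE : ∀ i, E i ∈ 𝔪 ^ (e + 1)) {n : ℕ} {f : MvPowerSeries σ K}
    (hf : f ∈ 𝔪 ^ n) : subst (X + E) f - f ∈ 𝔪 ^ (n + e) := by
  have h : subst (X + E) f - f = taylorRemainder E f + vectorField E f := by
    simp [taylorRemainder]
  rw [h]
  exact add_mem (Ideal.pow_le_pow_right (by omega) (taylorRemainder_mem_pow hE hf))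
    (vectorField_mem_pow hE hf)

theorem bijective_substAlgHom {g : σ → MvPowerSeries σ K} (hg : HasSubst g)
    (hgX : ∀ i, g i - X i ∈ 𝔪 ^ 2) : Function.Bijective (substAlgHom (R := K) hg) := by
  have hgE : g = X + fun i => g i - X i := by
    ext1 i
    simp
  have hψ n (f : MvPowerSeries σ K) (hf : f ∈ 𝔪 ^ n) :
      (substAlgHom hg).toAddMonoidHom f - f ∈ 𝔪 ^ (n + 1) := by
    have h := subst_X_add_sub_mem_pow (e := 1) hgX hf
    rw [← hgE] at h
    simpa using h
  exact ⟨IsHausdorff.injective_of_sub_mem_pow_succ (I := 𝔪) _ hψ,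
    IsAdicComplete.surjective_of_sub_mem_pow_succ (I := 𝔪) _ hψ⟩

end Fintype

end MvPowerSeries

section Determinacy

variable {K : Type*} [Field K] {s m n : ℕ} {A B : Matrix (Fin m) (Fin n) (MvPowerSeries (Fin s) K)}
  {o k : ℕ}

local notation "𝔪" => maximalIdeal (MvPowerSeries (Fin s) K)

theorem pderiv_eq_mvPowerSeries_pderiv (ν : Fin s) (f : MvPowerSeries (Fin s) K) :
    _root_.pderiv ν f = MvPowerSeries.pderiv K ν f := by
  ext d
  rw [MvPowerSeries.coeff_pderiv, mul_comm]
  simp [_root_.pderiv, MvPowerSeries.coeff_apply]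

theorem matSub_mul_le_smul_matSub (I J : Ideal (MvPowerSeries (Fin s) K)) :
    matSub (m := m) (n := n) (I * J) ≤ I • matSub J := by
  intro Z hZ
  rw [Matrix.matrix_eq_sum_single Z]
  refine Submodule.sum_mem _ fun i _ => Submodule.sum_mem _ fun j _ => ?_
  have h := Submodule.mem_map_of_mem (f := Matrix.singleLinearMap (MvPowerSeries (Fin s) K) i j)
    (p := I • J) (hZ i j)
  rw [Submodule.map_smul''] at h
  refine Submodule.smul_mono le_rfl ?_ h
  rintro _ ⟨r, hr, rfl⟩ i' j'
  rw [Matrix.singleLinearMap_apply, Matrix.single_apply]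
  split_ifs
  exacts [hr, zero_mem J]

theorem exists_eq_sum_mul_pderiv_of_mem_smul_TR
    {Z : Matrix (Fin m) (Fin n) (MvPowerSeries (Fin s) K)} {I : Ideal (MvPowerSeries (Fin s) K)}
    (hZ : Z ∈ I • TR A) : ∃ E : Fin s → MvPowerSeries (Fin s) K, (∀ ν, E ν ∈ I * 𝔪) ∧
      ∀ i j, Z i j = ∑ ν, E ν * MvPowerSeries.pderiv K ν (A i j) := by
  rw [TR, ← Submodule.mul_smul, Submodule.mem_ideal_smul_span_iff_exists_sum] at hZ
  obtain ⟨E, hE, rfl⟩ := hZ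
  refine ⟨E, hE, fun i j => ?_⟩
  rw [Finsupp.sum_fintype _ _ (by simp), Matrix.sum_apply]
  simp [pderiv_eq_mvPowerSeries_pderiv]

theorem mem_pow_of_mem_smul_TR {Z : Matrix (Fin m) (Fin n) (MvPowerSeries (Fin s) K)}
    (ho : ∀ i j, A i j ∈ 𝔪 ^ (o + 1)) (hZ : Z ∈ 𝔪 • TR A) (i : Fin m) (j : Fin n) :
    Z i j ∈ 𝔪 ^ (o + 2) := by
  obtain ⟨E, hE, hZE⟩ := exists_eq_sum_mul_pderiv_of_mem_smul_TR hZ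
  rw [hZE]
  refine Ideal.sum_mem _ fun ν _ => ?_
  have h := Ideal.mul_mem_mul (hE ν)
    ((MvPowerSeries.pderiv K ν).map_mem_pow_of_mem_pow_succ (ho i j))
  rwa [← pow_two, ← pow_add, add_comm] at h

theorem le_of_matSub_pow_le_smul_TR (ho : ∀ i j, A i j ∈ 𝔪 ^ (o + 1))
    (hk : matSub (𝔪 ^ (k + 2)) ≤ 𝔪 • TR A) (i : Fin m) (j : Fin n) (ν : Fin s) : o ≤ k := by
  have hX : Matrix.of (fun _ _ => (X ν : MvPowerSeries (Fin s) K) ^ (k + 2)) ∈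
      matSub (m := m) (n := n) (𝔪 ^ (k + 2)) :=
    fun _ _ => Ideal.pow_mem_pow (X_mem_maximalIdeal ν) _
  have := le_of_X_pow_mem_maximalIdeal_pow (mem_pow_of_mem_smul_TR ho (hk hX) i j)
  omega

theorem exists_sub_subst_mem_pow_succ {C : Matrix (Fin m) (Fin n) (MvPowerSeries (Fin s) K)}
    {a : ℕ} (hok : o ≤ k + 1) (hoa : k + 1 ≤ o + a) (ho : ∀ i j, A i j ∈ 𝔪 ^ o)
    (hk : matSub (𝔪 ^ (k + 2)) ≤ 𝔪 • TR A) (hC : ∀ i j, A i j - C i j ∈ 𝔪 ^ (a + (k + 2))) :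
    ∃ E : Fin s → MvPowerSeries (Fin s) K, (∀ ν, E ν ∈ 𝔪 ^ (a + 2)) ∧
      ∀ i j, A i j - subst (X + E) (C i j) ∈ 𝔪 ^ (a + (k + 2) + 1) := by
  have hD := matSub_mul_le_smul_matSub _ _ (pow_add 𝔪 a (k + 2) ▸ hC :
    Matrix.of (fun i j => A i j - C i j) ∈ matSub (𝔪 ^ a * 𝔪 ^ (k + 2)))
  obtain ⟨E, hE, hAC⟩ := exists_eq_sum_mul_pderiv_of_mem_smul_TR
    (Submodule.mul_smul (𝔪 ^ a) 𝔪 (TR A) ▸ Submodule.smul_mono le_rfl hk hD)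
  have hE' ν : E ν ∈ 𝔪 ^ (a + 1 + 1) := by simpa [← pow_succ] using hE ν
  refine ⟨E, hE', fun i j => ?_⟩
  -- `A - C = D A` for the vector field `D = ∑ E ν ∂ν`, so `A - φ C = D (A - C) - (φ C - C - D C)`
  have hkey : A i j - subst (X + E) (C i j) =
      MvPowerSeries.vectorField E (A i j - C i j) - MvPowerSeries.taylorRemainder E (C i j) := by
    have := hAC i j
    rw [Matrix.of_apply] at this
    rw [map_sub, MvPowerSeries.vectorField_apply, ← this, MvPowerSeries.taylorRemainder]
    ring
  have hCo : C i j ∈ 𝔪 ^ o := by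
    simpa using sub_mem (ho i j) (Ideal.pow_le_pow_right (by omega) (hC i j))
  rw [hkey]
  exact sub_mem
    (Ideal.pow_le_pow_right (by omega) (MvPowerSeries.vectorField_mem_pow hE' (hC i j)))
    (Ideal.pow_le_pow_right (by omega) (MvPowerSeries.taylorRemainder_mem_pow hE' hCo))

theorem exists_seq_sub_subst_mem_pow (hok : o ≤ k + 1) (ho : ∀ i j, A i j ∈ 𝔪 ^ o)
    (hk : matSub (𝔪 ^ (k + 2)) ≤ 𝔪 • TR A) (hB : ∀ i j, B i j - A i j ∈ 𝔪 ^ (2 * k + 3 - o)) :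
    ∃ G : ℕ → Fin s → MvPowerSeries (Fin s) K, G 0 = X ∧ ∀ l, ((∀ ν, G l ν ∈ 𝔪) ∧
      ∀ i j, A i j - subst (G l) (B i j) ∈ 𝔪 ^ (k + 1 - o + l + (k + 2))) ∧
      ∀ ν, G (l + 1) ν - G l ν ∈ 𝔪 ^ (l + 2) := by
  refine exists_seq_of_forall_exists
    (P := fun l G => (∀ ν, G ν ∈ 𝔪) ∧
      ∀ i j, A i j - subst G (B i j) ∈ 𝔪 ^ (k + 1 - o + l + (k + 2)))
    (Q := fun l G G' => ∀ ν, G' ν - G ν ∈ 𝔪 ^ (l + 2))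
    ⟨X_mem_maximalIdeal, fun i j => ?_⟩ fun l G ⟨hG, hAG⟩ => ?_
  · rw [subst_self, id, ← neg_sub, show k + 1 - o + 0 + (k + 2) = 2 * k + 3 - o by omega]
    exact neg_mem (hB i j)
  obtain ⟨E, hE, hAE⟩ := exists_sub_subst_mem_pow_succ (C := B.map (subst G))
    (a := k + 1 - o + l) hok (by omega) ho hk hAG
  have hE₁ ν : E ν ∈ 𝔪 := Ideal.pow_le_self (by omega) (hE ν)
  refine ⟨fun ν => subst (X + E) (G ν), ⟨fun ν => ?_, fun i j => ?_⟩, fun ν => ?_⟩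
  · simpa using
      subst_mem_maximalIdeal_pow (n := 1) (X_add_mem_maximalIdeal hE₁) (by simpa using hG ν)
  · rw [← subst_comp_subst_apply (hasSubst_of_mem_maximalIdeal hG) (hasSubst_X_add hE₁),
      show k + 1 - o + (l + 1) + (k + 2) = k + 1 - o + l + (k + 2) + 1 by omega]
    exact hAE i j
  · exact Ideal.pow_le_pow_right (by omega)
      (subst_X_add_sub_mem_pow (e := k + 1 - o + l + 1) hE (n := 1) (by simpa using hG ν))

theorem exists_subst_eq_of_sub_mem_pow (hok : o ≤ k + 1) (ho : ∀ i j, A i j ∈ 𝔪 ^ o)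
    (hk : matSub (𝔪 ^ (k + 2)) ≤ 𝔪 • TR A) (hB : ∀ i j, B i j - A i j ∈ 𝔪 ^ (2 * k + 3 - o)) :
    ∃ G : Fin s → MvPowerSeries (Fin s) K, (∀ ν, G ν - X ν ∈ 𝔪 ^ 2) ∧ B.map (subst G) = A := by
  obtain ⟨G, hG₀, hG⟩ := exists_seq_sub_subst_mem_pow hok ho hk hB
  choose L hL using fun ν => IsPrecomplete.exists_sub_mem_pow (I := 𝔪) (c := 2)
    (f := fun l => G l ν) fun l => (hG l).2 ν
  have hL₁ ν : L ν ∈ 𝔪 := by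
    simpa using add_mem (Ideal.pow_le_self (by norm_num) (hL ν 0)) ((hG 0).1.1 ν)
  refine ⟨L, fun ν => by simpa [hG₀] using hL ν 0, Matrix.ext fun i j => ?_⟩
  refine eq_of_sub_eq_zero (IsHausdorff.eq_zero_of_forall_mem_pow (I := 𝔪) fun l => ?_)
  have h : subst L (B i j) - A i j =
      (subst L (B i j) - subst (G l) (B i j)) - (A i j - subst (G l) (B i j)) := by ring
  rw [Matrix.map_apply, h]
  exact sub_mem
    (Ideal.pow_le_pow_right (by omega) (subst_sub_subst_mem_pow hL₁ (hG l).1.1 (hL · l) _))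
    (Ideal.pow_le_pow_right (by omega) ((hG l).1.2 i j))

end Determinacy

theorem finite_right_determinacy {K : Type*} [Field K] {s m n : ℕ}
    (A : Matrix (Fin m) (Fin n) (MvPowerSeries (Fin s) K))
    (hA : ∀ i j, A i j ∈ maximalIdeal (MvPowerSeries (Fin s) K))
    -- o = ord(A): every entry lies in m^o and some entry does not lie in m^{o+1}
    (o : ℕ) (ho : ∀ i j, A i j ∈ (maximalIdeal (MvPowerSeries (Fin s) K)) ^ o)
    (ho2 : ¬ ∀ i j, A i j ∈ (maximalIdeal (MvPowerSeries (Fin s) K)) ^ (o + 1))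
    (k : ℕ)
    (hk : matSub ((maximalIdeal (MvPowerSeries (Fin s) K)) ^ (k + 2)) ≤
      (maximalIdeal (MvPowerSeries (Fin s) K)) • TR A) :
    ∀ B : Matrix (Fin m) (Fin n) (MvPowerSeries (Fin s) K),
      (∀ i j, B i j - A i j ∈ (maximalIdeal (MvPowerSeries (Fin s) K)) ^ (2 * k + 3 - o)) →
      ∃ φ : MvPowerSeries (Fin s) K ≃ₐ[K] MvPowerSeries (Fin s) K, B = A.map φ := by
  intro B hB
  obtain ⟨i₀, j₀, hA₀⟩ : ∃ i j, A i j ∉ maximalIdeal (MvPowerSeries (Fin s) K) ^ (o + 1) := by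
    simpa using ho2
  obtain ⟨o, rfl⟩ : ∃ o', o = o' + 1 :=
    Nat.exists_eq_add_one.mpr (Nat.pos_of_ne_zero fun h => hA₀ (by simpa [h] using hA i₀ j₀))
  obtain ⟨ν₀⟩ : Nonempty (Fin s) := by
    by_contra hs
    rw [not_nonempty_iff] at hs
    have h := hA i₀ j₀
    rw [maximalIdeal_eq_bot_of_isEmpty, Ideal.mem_bot] at h
    exact hA₀ (h ▸ zero_mem _)
  obtain ⟨G, hGX, hGA⟩ := exists_subst_eq_of_sub_mem_pow
    (Nat.succ_le_succ (le_of_matSub_pow_le_smul_TR ho hk i₀ j₀ ν₀)) ho hk hB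
  have hG : HasSubst G := hasSubst_of_mem_maximalIdeal fun ν => by
    simpa using add_mem (Ideal.pow_le_self two_ne_zero (hGX ν)) (X_mem_maximalIdeal ν)
  let φ := AlgEquiv.ofBijective (substAlgHom hG) (bijective_substAlgHom hG hGX)
  refine ⟨φ.symm, Matrix.ext fun i j => ?_⟩
  rw [← hGA, Matrix.map_apply, Matrix.map_apply, ← substAlgHom_apply hG]
  exact (φ.symm_apply_apply (B i j)).symm
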